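/- arXiv:2508.14628 — 4 statements merged into one kernel-verified Lean document; each statement's English description precedes it below -/
import Mathlib

section
/- Fix a prime p and m > q ≥ 0. The diagonal map e : E(l,m) → E(l,m+1) defined by e(x) = C·(x,…,x) (p copies, with C = p^{-1/2} so that e is an isometry) sends E(l,m) isomorphically (as a G_m-space, where G_m = ZMod(p^m) is identified with the quotient G_{m+1}/(p^m·G_{m+1})) onto the set E^m(l,m+1) of p^m-periodic points of E(l,m+1), carries E^q(l,m) onto E^q(l,m+1), and restricts to a G_m-equivariant isometric bijection from K(l,m,q) onto the set of p^m-periodic points of K(l,m+1,q). -/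
open Set Metric

/-- `E(l,n) = (ℝ^l)^{ZMod n}` as a Euclidean space. -/
abbrev Esp (n l : ℕ) [NeZero n] : Type := EuclideanSpace ℝ (ZMod n × Fin l)

/-- The shift action of `ZMod n` on `E(l,n)`. -/
def shiftE {n l : ℕ} [NeZero n] (h : ZMod n) (y : Esp n l) : Esp n l :=
  WithLp.toLp 2 (fun gi => y (gi.1 + h, gi.2))

/-- The linear subspace of `c`-periodic points of `E(l,n)`. -/
def perSub (n l : ℕ) [NeZero n] (c : ZMod n) : Submodule ℝ (Esp n l) where
  carrier := {y | ∀ gi : ZMod n × Fin l, y (gi.1 + c, gi.2) = y gi}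
  add_mem' := by
    intro a b ha hb gi
    show a (gi.1 + c, gi.2) + b (gi.1 + c, gi.2) = a gi + b gi
    rw [ha gi, hb gi]
  zero_mem' := by intro gi; rfl
  smul_mem' := by
    intro r a ha gi
    show r * a (gi.1 + c, gi.2) = r * a gi
    rw [ha gi]

/-- `K(l,n,c)`: the unit sphere in the orthogonal complement of the subspace of
`c`-periodic points. -/
def Kset (n l : ℕ) [NeZero n] (c : ZMod n) : Set (Esp n l) :=
  {y | y ∈ (perSub n l c)ᗮ ∧ ‖y‖ = 1}

/-- The diagonal map `e : E(l,m) → E(l,m+1)`, `e(x) = C·(x,…,x)` with `C = p^{-1/2}`,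
written via reduction `ZMod (p^(m+1)) → ZMod (p^m)`. -/
noncomputable def diagMap (p m l : ℕ) [NeZero (p ^ m)] [NeZero (p ^ (m + 1))]
    (hdvd : p ^ m ∣ p ^ (m + 1)) (y : Esp (p ^ m) l) : Esp (p ^ (m + 1)) l :=
  WithLp.toLp 2 (fun gi => (Real.sqrt p)⁻¹ * y (ZMod.castHom hdvd (ZMod (p ^ m)) gi.1, gi.2))

/-!
Up to the factor `p^{-1/2}`, the diagonal map is pullback along the reduction
`π : ZMod (p^(m+1)) → ZMod (p^m)`, all of whose fibres have `p` elements; hence it preserves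
inner products. It intertwines the shift by `h` with the shift by `π h`, so, being injective,
`e x` is `c`-periodic exactly when `x` is `π c`-periodic. A `p^m`-periodic point of
`E(l,m+1)` is constant on the fibres of `π`, which identifies the range of `e`; as
`p^q`-periodic points are `p^m`-periodic for `q ≤ m`, `e` maps `E^q(l,m)` onto
`E^q(l,m+1)`, and then, preserving inner products, the orthogonal complements and their unit
spheres correspond as well.
-/

open scoped InnerProductSpace in
theorem LinearIsometry.map_mem_orthogonal_map_iff {𝕜 E F : Type*} [RCLike 𝕜]
    [NormedAddCommGroup E] [InnerProductSpace 𝕜 E] [NormedAddCommGroup F]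
    [InnerProductSpace 𝕜 F] (f : E →ₗᵢ[𝕜] F) (K : Submodule 𝕜 E) (x : E) :
    f x ∈ (K.map f.toLinearMap)ᗮ ↔ x ∈ Kᗮ := by
  simp only [Submodule.mem_orthogonal, Submodule.mem_map, LinearIsometry.coe_toLinearMap,
    forall_exists_index, and_imp, forall_apply_eq_imp_iff₂, f.inner_map_map]

theorem NeZero.of_pow_succ {M₀ : Type*} [MonoidWithZero M₀] {a : M₀} {k : ℕ}
    [NeZero (a ^ (k + 1))] : NeZero a :=
  ⟨fun ha => NeZero.ne (a ^ (k + 1)) (by rw [ha, zero_pow k.succ_ne_zero])⟩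

open Finset in
theorem ZMod.card_castHom_fiber {n N : ℕ} [NeZero n] [NeZero N] (h : n ∣ N) (b : ZMod n) :
    #{g : ZMod N | castHom h (ZMod n) g = b} = N / n := by
  have hfib : ∀ b', #{g : ZMod N | castHom h (ZMod n) g = b'} =
      #{g : ZMod N | castHom h (ZMod n) g = b} := fun b' =>
    AddMonoidHom.card_fiber_eq_of_mem_range (castHom h (ZMod n)).toAddMonoidHom
      (castHom_surjective h b') (castHom_surjective h b)
  have hsum := card_eq_sum_card_fiberwise (f := castHom h (ZMod n)) (s := univ) (t := univ)
    fun _ _ => mem_univ _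
  rw [sum_congr rfl fun b' _ => hfib b', sum_const, card_univ, card_univ, ZMod.card, ZMod.card,
    smul_eq_mul] at hsum
  exact (Nat.div_eq_of_eq_mul_right (Nat.pos_of_neZero n) hsum).symm

open Finset in
theorem ZMod.sum_comp_castHom {M : Type*} [AddCommMonoid M] {n N : ℕ} [NeZero n] [NeZero N]
    (h : n ∣ N) (F : ZMod n → M) :
    ∑ g : ZMod N, F (castHom h (ZMod n) g) = (N / n) • ∑ b, F b := by
  rw [← sum_fiberwise' univ (castHom h (ZMod n)) F, smul_sum]
  simp only [sum_const, card_castHom_fiber]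

theorem ZMod.exists_eq_add_nsmul_of_castHom_eq {n N : ℕ} [NeZero N] (h : n ∣ N) {a b : ZMod N}
    (hab : castHom h (ZMod n) a = castHom h (ZMod n) b) : ∃ k : ℕ, a = b + k • (n : ZMod N) := by
  obtain ⟨k, hk⟩ : n ∣ (a - b).val := by
    rw [← ZMod.natCast_eq_zero_iff, ← ZMod.cast_eq_val, ← castHom_apply (h := h), map_sub, hab,
      sub_self]
  refine ⟨k, ?_⟩
  rw [nsmul_eq_mul, ← Nat.cast_mul, mul_comm, ← hk, ZMod.natCast_zmod_val]
  ring

section Periodic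

variable {n l : ℕ} [NeZero n]

theorem mem_perSub_iff_shiftE_eq {c : ZMod n} {y : Esp n l} :
    y ∈ perSub n l c ↔ shiftE c y = y :=
  ⟨fun hy => by ext gi; exact hy gi, fun hy gi => congrArg (· gi) hy⟩

theorem perSub_zero : perSub n l 0 = ⊤ :=
  eq_top_iff.mpr fun y _ gi => by rw [add_zero]

theorem apply_add_nsmul_of_mem_perSub {c : ZMod n} {y : Esp n l} (hy : y ∈ perSub n l c)
    (k : ℕ) (g : ZMod n) (i : Fin l) : y (g + k • c, i) = y (g, i) := by
  induction k with
  | zero => rw [zero_nsmul, add_zero]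
  | succ k ih => rw [succ_nsmul, ← add_assoc, hy (g + k • c, i), ih]

theorem perSub_le_perSub_nsmul (c : ZMod n) (k : ℕ) : perSub n l c ≤ perSub n l (k • c) :=
  fun _ hy gi => apply_add_nsmul_of_mem_perSub hy k gi.1 gi.2

end Periodic

theorem apply_eq_of_castHom_eq {n N l : ℕ} [NeZero N] (h : n ∣ N) {y : Esp N l}
    (hy : y ∈ perSub N l (n : ZMod N)) {a b : ZMod N}
    (hab : ZMod.castHom h (ZMod n) a = ZMod.castHom h (ZMod n) b) (i : Fin l) :
    y (a, i) = y (b, i) := by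
  obtain ⟨k, rfl⟩ := ZMod.exists_eq_add_nsmul_of_castHom_eq h hab
  exact apply_add_nsmul_of_mem_perSub hy k b i

section Diagonal

open scoped RealInnerProductSpace

variable (p m l : ℕ) [NeZero (p ^ m)] [NeZero (p ^ (m + 1))] (hdvd : p ^ m ∣ p ^ (m + 1))

local notation "π" => ZMod.castHom hdvd (ZMod (p ^ m))

theorem diagMap_apply (y : Esp (p ^ m) l) (gi : ZMod (p ^ (m + 1)) × Fin l) :
    diagMap p m l hdvd y gi = (Real.sqrt p)⁻¹ * y (π gi.1, gi.2) := rfl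

theorem diagMap_shiftE (h : ZMod (p ^ (m + 1))) (y : Esp (p ^ m) l) :
    diagMap p m l hdvd (shiftE (π h) y) = shiftE h (diagMap p m l hdvd y) := by
  ext gi
  simp only [diagMap_apply, shiftE, map_add]

noncomputable def diagLinearMap : Esp (p ^ m) l →ₗ[ℝ] Esp (p ^ (m + 1)) l where
  toFun := diagMap p m l hdvd
  map_add' x y := by ext gi; simp only [diagMap_apply, PiLp.add_apply]; ring
  map_smul' c x := by ext gi; simp only [diagMap_apply, PiLp.smul_apply, smul_eq_mul,
    RingHom.id_apply]; ring

theorem inner_diagMap (x y : Esp (p ^ m) l) :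
    ⟪diagMap p m l hdvd x, diagMap p m l hdvd y⟫ = ⟪x, y⟫ := by
  have : NeZero p := .of_pow_succ (k := m)
  have hp : (p : ℝ) ≠ 0 := Nat.cast_ne_zero.mpr (NeZero.ne p)
  have hscale : (Real.sqrt p)⁻¹ * (Real.sqrt p)⁻¹ * p = 1 := by
    rw [← mul_inv, Real.mul_self_sqrt (Nat.cast_nonneg p), inv_mul_cancel₀ hp]
  have hindex : p ^ (m + 1) / p ^ m = p := by
    rw [pow_succ, Nat.mul_div_cancel_left _ (Nat.pos_of_neZero _)]
  have hfiber := ZMod.sum_comp_castHom hdvd fun b => ∑ i, y (b, i) * x (b, i)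
  rw [hindex, nsmul_eq_mul] at hfiber
  simp only [PiLp.inner_apply, Fintype.sum_prod_type, diagMap_apply, RCLike.inner_apply,
    conj_trivial]
  calc ∑ g, ∑ i, (Real.sqrt p)⁻¹ * y (π g, i) * ((Real.sqrt p)⁻¹ * x (π g, i))
      = (Real.sqrt p)⁻¹ * (Real.sqrt p)⁻¹ * ∑ g, ∑ i, y (π g, i) * x (π g, i) := by
        simp only [Finset.mul_sum]; ring_nf
    _ = ∑ b, ∑ i, y (b, i) * x (b, i) := by rw [hfiber, ← mul_assoc, hscale, one_mul]

noncomputable def diagLinearIsometry : Esp (p ^ m) l →ₗᵢ[ℝ] Esp (p ^ (m + 1)) l :=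
  (diagLinearMap p m l hdvd).isometryOfInner (inner_diagMap p m l hdvd)

theorem coe_diagLinearIsometry : ⇑(diagLinearIsometry p m l hdvd) = diagMap p m l hdvd := rfl

theorem isometry_diagMap : Isometry (diagMap p m l hdvd) :=
  (diagLinearIsometry p m l hdvd).isometry

theorem diagMap_injective : Function.Injective (diagMap p m l hdvd) :=
  (diagLinearIsometry p m l hdvd).injective

theorem diagMap_mem_perSub_iff (c : ZMod (p ^ (m + 1))) (y : Esp (p ^ m) l) :
    diagMap p m l hdvd y ∈ perSub (p ^ (m + 1)) l c ↔ y ∈ perSub (p ^ m) l (π c) := by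
  rw [mem_perSub_iff_shiftE_eq, mem_perSub_iff_shiftE_eq, ← diagMap_shiftE,
    (diagMap_injective p m l hdvd).eq_iff]

theorem range_diagMap :
    range (diagMap p m l hdvd) = (perSub (p ^ (m + 1)) l ((p ^ m : ℕ) : ZMod (p ^ (m + 1))) :
      Set (Esp (p ^ (m + 1)) l)) := by
  refine Subset.antisymm ?_ fun y hy => ?_
  · rintro _ ⟨x, rfl⟩
    rw [SetLike.mem_coe, diagMap_mem_perSub_iff, map_natCast, ZMod.natCast_self, perSub_zero]
    exact Submodule.mem_top
  · have : NeZero p := .of_pow_succ (k := m)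
    have hsqrt : Real.sqrt p ≠ 0 := Real.sqrt_ne_zero'.mpr (Nat.cast_pos.mpr (NeZero.pos p))
    refine ⟨WithLp.toLp 2 fun bi => Real.sqrt p * y ((bi.1.val : ZMod (p ^ (m + 1))), bi.2), ?_⟩
    ext gi
    rw [diagMap_apply]
    simp only [inv_mul_cancel_left₀ hsqrt]
    refine apply_eq_of_castHom_eq hdvd hy ?_ gi.2
    rw [map_natCast, ZMod.natCast_zmod_val]

theorem image_diagMap_perSub {q : ℕ} (hq : q ≤ m) :
    diagMap p m l hdvd '' (perSub (p ^ m) l ((p ^ q : ℕ) : ZMod (p ^ m))) =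
      (perSub (p ^ (m + 1)) l ((p ^ q : ℕ) : ZMod (p ^ (m + 1))) :
        Set (Esp (p ^ (m + 1)) l)) := by
  have hcast : π ((p ^ q : ℕ) : ZMod (p ^ (m + 1))) = ((p ^ q : ℕ) : ZMod (p ^ m)) :=
    map_natCast _ _
  refine Subset.antisymm ?_ fun y hy => ?_
  · rintro _ ⟨x, hx, rfl⟩
    rwa [SetLike.mem_coe, diagMap_mem_perSub_iff, hcast]
  · have hpm : ((p ^ m : ℕ) : ZMod (p ^ (m + 1))) =
        p ^ (m - q) • ((p ^ q : ℕ) : ZMod (p ^ (m + 1))) := by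
      rw [nsmul_eq_mul, ← Nat.cast_mul, ← pow_add, Nat.sub_add_cancel hq]
    have hym : y ∈ range (diagMap p m l hdvd) := by
      rw [range_diagMap, SetLike.mem_coe, hpm]
      exact perSub_le_perSub_nsmul _ _ hy
    obtain ⟨x, rfl⟩ := hym
    refine ⟨x, ?_, rfl⟩
    rwa [SetLike.mem_coe, ← hcast, ← diagMap_mem_perSub_iff]

theorem perSub_eq_map_diagLinearIsometry {q : ℕ} (hq : q ≤ m) :
    perSub (p ^ (m + 1)) l ((p ^ q : ℕ) : ZMod (p ^ (m + 1))) =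
      (perSub (p ^ m) l ((p ^ q : ℕ) : ZMod (p ^ m))).map
        (diagLinearIsometry p m l hdvd).toLinearMap :=
  SetLike.coe_injective (image_diagMap_perSub p m l hdvd hq).symm

theorem image_diagMap_Kset {q : ℕ} (hq : q ≤ m) :
    diagMap p m l hdvd '' Kset (p ^ m) l ((p ^ q : ℕ) : ZMod (p ^ m)) =
      Kset (p ^ (m + 1)) l ((p ^ q : ℕ) : ZMod (p ^ (m + 1))) ∩
        perSub (p ^ (m + 1)) l ((p ^ m : ℕ) : ZMod (p ^ (m + 1))) := by
  have horth (x : Esp (p ^ m) l) := (perSub_eq_map_diagLinearIsometry p m l hdvd hq).symm ▸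
    (diagLinearIsometry p m l hdvd).map_mem_orthogonal_map_iff
      (perSub (p ^ m) l ((p ^ q : ℕ) : ZMod (p ^ m))) x
  have hnorm := (diagLinearIsometry p m l hdvd).norm_map
  rw [coe_diagLinearIsometry] at horth hnorm
  refine Subset.antisymm ?_ fun y ⟨⟨hyo, hy1⟩, hym⟩ => ?_
  · rintro _ ⟨x, ⟨hxo, hx1⟩, rfl⟩
    rw [← range_diagMap p m l hdvd]
    exact ⟨⟨(horth x).mpr hxo, (hnorm x).trans hx1⟩, mem_range_self x⟩
  · rw [← range_diagMap p m l hdvd] at hym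
    obtain ⟨x, rfl⟩ := hym
    exact ⟨x, ⟨(horth x).mp hyo, (hnorm x).symm.trans hy1⟩, rfl⟩

end Diagonal

theorem diagonal_map_onto_periodic_points_general (p m q l : ℕ) (hq : q < m)
    [NeZero (p ^ m)] [NeZero (p ^ (m + 1))] (hdvd : p ^ m ∣ p ^ (m + 1)) :
    letI e := diagMap p m l hdvd
    letI cq : ZMod (p ^ m) := ((p ^ q : ℕ) : ZMod (p ^ m))
    letI cq' : ZMod (p ^ (m + 1)) := ((p ^ q : ℕ) : ZMod (p ^ (m + 1)))
    letI cm' : ZMod (p ^ (m + 1)) := ((p ^ m : ℕ) : ZMod (p ^ (m + 1)))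
    Isometry e ∧
    (∀ (h : ZMod (p ^ (m + 1))) (y : Esp (p ^ m) l),
      e (shiftE (ZMod.castHom hdvd (ZMod (p ^ m)) h) y) = shiftE h (e y)) ∧
    Set.range e = ((perSub (p ^ (m + 1)) l cm' : Set (Esp (p ^ (m + 1)) l))) ∧
    e '' ((perSub (p ^ m) l cq : Set (Esp (p ^ m) l))) =
      ((perSub (p ^ (m + 1)) l cq' : Set (Esp (p ^ (m + 1)) l))) ∧
    Set.BijOn e (Kset (p ^ m) l cq)
      (Kset (p ^ (m + 1)) l cq' ∩ (perSub (p ^ (m + 1)) l cm' : Set (Esp (p ^ (m + 1)) l))) := by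
  refine ⟨isometry_diagMap p m l hdvd, diagMap_shiftE p m l hdvd, range_diagMap p m l hdvd,
    image_diagMap_perSub p m l hdvd hq.le, ?_⟩
  rw [← image_diagMap_Kset p m l hdvd hq.le]
  exact (diagMap_injective p m l hdvd).injOn.bijOn_image

/-- The diagonal map `e : E(l,m) → E(l,m+1)` is an isometry, is equivariant
for the `G_m = G_{m+1}/H` actions, has image exactly the set `E^m(l,m+1)` of
`p^m`-periodic points, carries `E^q(l,m)` onto `E^q(l,m+1)`, and restricts to a
`G_m`-equivariant isometric bijection from `K(l,m,q)` onto the `p^m`-periodic points of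
`K(l,m+1,q)`. -/
theorem diagonal_map_onto_periodic_points (p m q l : ℕ) (hp : p.Prime) (hq : q < m)
    [NeZero (p ^ m)] [NeZero (p ^ (m + 1))] (hdvd : p ^ m ∣ p ^ (m + 1)) :
    letI e := diagMap p m l hdvd
    letI cq : ZMod (p ^ m) := ((p ^ q : ℕ) : ZMod (p ^ m))
    letI cq' : ZMod (p ^ (m + 1)) := ((p ^ q : ℕ) : ZMod (p ^ (m + 1)))
    letI cm' : ZMod (p ^ (m + 1)) := ((p ^ m : ℕ) : ZMod (p ^ (m + 1)))
    Isometry e ∧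
    (∀ (h : ZMod (p ^ (m + 1))) (y : Esp (p ^ m) l),
      e (shiftE (ZMod.castHom hdvd (ZMod (p ^ m)) h) y) = shiftE h (e y)) ∧
    Set.range e = ((perSub (p ^ (m + 1)) l cm' : Set (Esp (p ^ (m + 1)) l))) ∧
    e '' ((perSub (p ^ m) l cq : Set (Esp (p ^ m) l))) =
      ((perSub (p ^ (m + 1)) l cq' : Set (Esp (p ^ (m + 1)) l))) ∧
    Set.BijOn e (Kset (p ^ m) l cq)
      (Kset (p ^ (m + 1)) l cq' ∩ (perSub (p ^ (m + 1)) l cm' : Set (Esp (p ^ (m + 1)) l))) :=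
  diagonal_map_onto_periodic_points_general p m q l hq hdvd
end

section
/- Fix a prime p, m > q ≥ 0, and l ≥ 1, and let G = ZMod(p^m). Suppose X is a G-space that admits no G-equivariant continuous map to E(l,m) \ E^q(l,m) (equivalently, by G-homotopy equivalence, to K(l,m,q)). Then for every continuous map f : X → ℝ^l there exists x ∈ X such that the set f^G(G·x) ⊆ (ℝ^l)^G has at most p^q elements; in particular f(G·x) has at most p^q elements. -/
/-- The additive shift action of `ZMod n` on `(Fin l → ℝ)^{ZMod n}`: `(h • y) g = y (g + h)`. -/
def addShift {n l : ℕ} (h : ZMod n) (y : ZMod n → Fin l → ℝ) : ZMod n → Fin l → ℝ :=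
  fun g => y (g + h)

/-- The induced equivariant map `f^G`, `(f^G x) g = f (g • x)` (additively: `g` acting
via the identification of `ZMod n` with the acting group). -/
def inducedMap {X : Type*} {n l : ℕ} [MulAction (Multiplicative (ZMod n)) X]
    (f : X → Fin l → ℝ) (x : X) : ZMod n → Fin l → ℝ :=
  fun g => f (Multiplicative.ofAdd g • x)

/-! If no `f^G(x)` were `p^q`-periodic, `f^G` would be a continuous `G`-map into
`E(l,m) \ E^q(l,m)`, which is excluded. For a `p^q`-periodic `f^G(x)`, both its shifts (the points
of `f^G(G·x)`) and its values (the points of `f(G·x)`) depend only on the index modulo `p^q`. -/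

open Function

section Periodic

variable {β : Type*} {n d : ℕ}

theorem Function.Periodic.eq_natCast_val_mod [NeZero n] {y : ZMod n → β}
    (hy : Periodic y (d : ZMod n)) (a : ZMod n) : y a = y ((a.val % d : ℕ) : ZMod n) := by
  conv_lhs => rw [← ZMod.natCast_zmod_val a, ← Nat.mod_add_div' a.val d]
  push_cast
  exact hy.nat_mul _ _

theorem Function.Periodic.natCard_range_le [NeZero n] {y : ZMod n → β}
    (hy : Periodic y (d : ZMod n)) (hd : 0 < d) : Nat.card (Set.range y) ≤ d := by
  have hsub : Set.range y ⊆ Set.range fun k : Fin d => y (k : ℕ) := by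
    rintro _ ⟨a, rfl⟩
    exact ⟨⟨a.val % d, Nat.mod_lt _ hd⟩, (hy.eq_natCast_val_mod a).symm⟩
  calc Nat.card (Set.range y)
      ≤ Nat.card (Set.range fun k : Fin d => y (k : ℕ)) := Nat.card_mono (Set.finite_range _) hsub
    _ ≤ Nat.card (Fin d) := Finite.card_range_le _
    _ = d := Nat.card_fin d

theorem Function.Periodic.addShift {l : ℕ} {y : ZMod n → Fin l → ℝ} {c : ZMod n}
    (hy : Periodic y c) : Periodic (fun h => addShift h y) c := by
  intro h
  funext g
  simp only [_root_.addShift, ← add_assoc]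
  exact hy _

end Periodic

section InducedMap

variable {X : Type*} {n l : ℕ} [MulAction (Multiplicative (ZMod n)) X] (f : X → Fin l → ℝ)

theorem continuous_inducedMap [TopologicalSpace X]
    (hact : ∀ g : Multiplicative (ZMod n), Continuous fun x : X => g • x) (hf : Continuous f) :
    Continuous (inducedMap (n := n) f) :=
  continuous_pi fun _ => hf.comp (hact _)

theorem inducedMap_ofAdd_smul (h : ZMod n) (x : X) :
    inducedMap f (Multiplicative.ofAdd h • x) = addShift h (inducedMap f x) := by
  funext g
  simp only [inducedMap, _root_.addShift, smul_smul, ← ofAdd_add]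

theorem image_orbit_eq_range_inducedMap (x : X) :
    f '' MulAction.orbit (Multiplicative (ZMod n)) x = Set.range (inducedMap (n := n) f x) :=
  (Set.range_comp f _).symm

theorem inducedMap_image_orbit (x : X) :
    inducedMap f '' MulAction.orbit (Multiplicative (ZMod n)) x =
      Set.range fun h : ZMod n => addShift h (inducedMap f x) := by
  rw [MulAction.orbit, ← Set.range_comp]
  congr 1
  funext g
  exact inducedMap_ofAdd_smul f (Multiplicative.toAdd g) x

end InducedMap

theorem borsuk_ulam_from_no_G_map_general (p : ℕ) (hp : p.Prime) (m q l : ℕ)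
    {X : Type*} [TopologicalSpace X] [MulAction (Multiplicative (ZMod (p ^ m))) X]
    (hact : ∀ g : Multiplicative (ZMod (p ^ m)), Continuous fun x : X => g • x)
    (hnomap : ¬ ∃ F : X → (ZMod (p ^ m) → Fin l → ℝ), Continuous F ∧
        (∀ x, ∃ g : ZMod (p ^ m), F x (g + (p ^ q : ℕ)) ≠ F x g) ∧
        (∀ (h : ZMod (p ^ m)) (x : X), F (Multiplicative.ofAdd h • x) = addShift h (F x)))
    (f : X → Fin l → ℝ) (hf : Continuous f) :
    ∃ x : X,
      Nat.card (inducedMap (n := p ^ m) f '' MulAction.orbit (Multiplicative (ZMod (p ^ m))) x) ≤ p ^ q ∧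
      Nat.card (f '' MulAction.orbit (Multiplicative (ZMod (p ^ m))) x) ≤ p ^ q := by
  have : NeZero (p ^ m) := ⟨pow_ne_zero _ hp.ne_zero⟩
  obtain ⟨x, hx⟩ : ∃ x, Periodic (inducedMap (n := p ^ m) f x) ((p ^ q : ℕ) : ZMod (p ^ m)) := by
    by_contra! hnone
    refine hnomap ⟨inducedMap f, continuous_inducedMap f hact hf, fun x => ?_,
      inducedMap_ofAdd_smul f⟩
    simpa only [Periodic, not_forall] using hnone x
  have hpq : 0 < p ^ q := pow_pos hp.pos q
  refine ⟨x, ?_, ?_⟩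
  · rw [inducedMap_image_orbit]
    exact hx.addShift.natCard_range_le hpq
  · rw [image_orbit_eq_range_inducedMap]
    exact hx.natCard_range_le hpq

/-- Let `G = ℤ/p^mℤ` act on a space `X`. If `X` admits no continuous
`G`-map to `E(l,m) \ E^q(l,m)` (the non-`p^q`-periodic points of `(ℝ^l)^G` with the
shift action), then for every continuous `f : X → ℝ^l` there is `x ∈ X` with
`|f^G(G·x)| ≤ p^q`; in particular `|f(G·x)| ≤ p^q`. -/
theorem borsuk_ulam_from_no_G_map (p : ℕ) (hp : p.Prime) (m q l : ℕ) (hq : q < m) (hl : 1 ≤ l)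
    {X : Type*} [TopologicalSpace X] [MulAction (Multiplicative (ZMod (p ^ m))) X]
    (hact : ∀ g : Multiplicative (ZMod (p ^ m)), Continuous fun x : X => g • x)
    (hnomap : ¬ ∃ F : X → (ZMod (p ^ m) → Fin l → ℝ), Continuous F ∧
        (∀ x, ∃ g : ZMod (p ^ m), F x (g + (p ^ q : ℕ)) ≠ F x g) ∧
        (∀ (h : ZMod (p ^ m)) (x : X), F (Multiplicative.ofAdd h • x) = addShift h (F x)))
    (f : X → Fin l → ℝ) (hf : Continuous f) :
    ∃ x : X,
      Nat.card (inducedMap (n := p ^ m) f '' MulAction.orbit (Multiplicative (ZMod (p ^ m))) x) ≤ p ^ q ∧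
      Nat.card (f '' MulAction.orbit (Multiplicative (ZMod (p ^ m))) x) ≤ p ^ q :=
  borsuk_ulam_from_no_G_map_general p hp m q l hact hnomap f hf
end

section
/- Let (X, T) be a dynamical system on a compact metric space such that for every continuous f : X → ℝ there exists x ∈ X with f(ℤ·x) containing at most one point, i.e., f is constant on the orbit {T^n x : n ∈ ℤ} of x. Then for any open sets U₀, U₁ ⊆ X with ℤ·U₀ = ℤ·U₁ = X, we have U₀ ∩ U₁ ≠ ∅. -/
open Set

/-- Let `(X,T)` be a dynamical system on a compact metric space such that
every continuous `f : X → ℝ` is constant on some orbit. Then any two open sets whose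
`ℤ`-orbits cover `X` must intersect. -/
theorem open_saturating_sets_intersect {X : Type*} [MetricSpace X] [CompactSpace X]
    (T : Equiv.Perm X) (hT : Continuous T) (hT' : Continuous T.symm)
    (hconst : ∀ f : C(X, ℝ), ∃ x : X, ∀ n : ℤ, f ((T ^ n) x) = f x)
    (U₀ U₁ : Set X) (h₀ : IsOpen U₀) (h₁ : IsOpen U₁)
    (hc₀ : (⋃ n : ℤ, ⇑(T ^ n) '' U₀) = univ) (hc₁ : (⋃ n : ℤ, ⇑(T ^ n) '' U₁) = univ) :
    (U₀ ∩ U₁).Nonempty := by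
  by_contra hdisj
  rw [not_nonempty_iff_eq_empty] at hdisj
  -- the separating continuous function
  set f : C(X, ℝ) := ⟨fun x => Metric.infDist x U₀ᶜ - Metric.infDist x U₁ᶜ,
    (Metric.continuous_infDist_pt _).sub (Metric.continuous_infDist_pt _)⟩ with hf
  obtain ⟨x, hx⟩ := hconst f
  -- orbit of x meets U₀ and U₁
  have hmeet : ∀ (U : Set X), (⋃ n : ℤ, ⇑(T ^ n) '' U) = univ → ∃ n : ℤ, (T ^ n) x ∈ U := by
    intro U hU
    have : x ∈ ⋃ n : ℤ, ⇑(T ^ n) '' U := hU ▸ mem_univ x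
    obtain ⟨n, p, hp, hpx⟩ := mem_iUnion.1 this
    refine ⟨-n, ?_⟩
    have : (T ^ (-n)) x = p := by
      rw [← hpx, zpow_neg]
      exact Equiv.symm_apply_apply _ _
    rwa [this]
  obtain ⟨n₀, hn₀⟩ := hmeet U₀ hc₀
  obtain ⟨n₁, hn₁⟩ := hmeet U₁ hc₁
  -- U₀ ⊆ U₁ᶜ and U₁ ⊆ U₀ᶜ
  have hsub₀ : U₀ ⊆ U₁ᶜ := fun p hp hq => (eq_empty_iff_forall_notMem.1 hdisj p) ⟨hp, hq⟩
  have hsub₁ : U₁ ⊆ U₀ᶜ := fun p hp hq => (eq_empty_iff_forall_notMem.1 hdisj p) ⟨hq, hp⟩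
  -- value at the U₀-point is positive
  have hc₀ne : U₀ᶜ.Nonempty := ⟨_, hsub₁ hn₁⟩
  have hc₁ne : U₁ᶜ.Nonempty := ⟨_, hsub₀ hn₀⟩
  have hpos : 0 < f ((T ^ n₀) x) := by
    have h1 : 0 < Metric.infDist ((T ^ n₀) x) U₀ᶜ := by
      exact (h₀.isClosed_compl.notMem_iff_infDist_pos hc₀ne).1 (by simpa using hn₀)
    have h2 : Metric.infDist ((T ^ n₀) x) U₁ᶜ = 0 :=
      Metric.infDist_zero_of_mem (hsub₀ hn₀)
    simp only [hf, ContinuousMap.coe_mk, h2, sub_zero]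
    exact h1
  have hneg : f ((T ^ n₁) x) < 0 := by
    have h1 : 0 < Metric.infDist ((T ^ n₁) x) U₁ᶜ := by
      exact (h₁.isClosed_compl.notMem_iff_infDist_pos hc₁ne).1 (by simpa using hn₁)
    have h2 : Metric.infDist ((T ^ n₁) x) U₀ᶜ = 0 :=
      Metric.infDist_zero_of_mem (hsub₁ hn₁)
    simp only [hf, ContinuousMap.coe_mk, h2, zero_sub]
    linarith
  rw [hx n₀] at hpos
  rw [hx n₁] at hneg
  linarith
end

section
/- If a ℤ-dynamical system (X, T) on a compact metric space admits two disjoint open sets U₀, U₁ each of whose ℤ-orbits cover X, then there is a continuous map f : X → [0,1] such that for every x ∈ X the set f({T^n x : n ∈ ℤ}) contains both 0 and 1. -/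
open Set

theorem exists_isClosed_subset_forall_exists_apply_mem {X ι : Type*} [TopologicalSpace X]
    [CompactSpace X] [T2Space X] {φ : ι → X → X} (hφ : ∀ i, Continuous (φ i)) {U : Set X}
    (hU : IsOpen U) (hcover : ∀ x, ∃ i, φ i x ∈ U) :
    ∃ F : Set X, IsClosed F ∧ F ⊆ U ∧ ∀ x, ∃ i, φ i x ∈ F := by
  obtain ⟨t, ht⟩ := isCompact_univ.elim_finite_subcover (fun i => φ i ⁻¹' U)
    (fun i => hU.preimage (hφ i)) fun x _ => mem_iUnion.2 (hcover x)
  obtain ⟨v, hv_cover, hv_closed, hv_sub⟩ :=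
    exists_iUnion_eq_closed_subset (u := fun i : t => φ i ⁻¹' U)
      (fun i => hU.preimage (hφ i)) (fun _ => toFinite _)
      (univ_subset_iff.1 fun x hx => by simpa using ht hx)
  -- `φ i` maps the closed shrinking `v i ⊆ φ i ⁻¹' U` onto a compact, hence closed, part of `U`.
  refine ⟨⋃ i : t, φ i '' v i,
    isClosed_iUnion_of_finite fun i => ((hv_closed i).isCompact.image (hφ i)).isClosed,
    iUnion_subset fun i => image_subset_iff.2 (hv_sub i), fun x => ?_⟩
  obtain ⟨i, hi⟩ := mem_iUnion.1 (hv_cover ▸ mem_univ x)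
  exact ⟨i, mem_iUnion.2 ⟨i, mem_image_of_mem _ hi⟩⟩

theorem Equiv.Perm.continuous_zpow {X : Type*} [TopologicalSpace X] {T : Equiv.Perm X}
    (hT : Continuous T) (hT' : Continuous T.symm) (n : ℤ) : Continuous ⇑(T ^ n) := by
  induction n using Int.induction_on with
  | zero => exact continuous_id
  | succ n ih => rw [zpow_add_one, Equiv.Perm.coe_mul]; exact ih.comp hT
  | pred n ih => rw [zpow_sub_one, Equiv.Perm.coe_mul]; exact ih.comp hT'

theorem Equiv.Perm.exists_zpow_apply_mem_of_iUnion_zpow_image_eq_univ {X : Type*}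
    (T : Equiv.Perm X) {U : Set X} (hc : ⋃ n : ℤ, ⇑(T ^ n) '' U = univ) (x : X) :
    ∃ n : ℤ, (T ^ n) x ∈ U := by
  obtain ⟨n, u, hu, rfl⟩ := mem_iUnion.1 (hc ▸ mem_univ x)
  exact ⟨-n, by simpa [zpow_neg] using hu⟩

/-- If a `ℤ`-system on a compact metric space has two disjoint open sets
whose orbits each cover `X`, then there is a continuous `f : X → [0,1]` such that every
orbit image `f({Tⁿx : n ∈ ℤ})` contains both `0` and `1`. -/
theorem exists_map_hitting_zero_and_one {X : Type*} [MetricSpace X] [CompactSpace X]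
    (T : Equiv.Perm X) (hT : Continuous T) (hT' : Continuous T.symm)
    (U₀ U₁ : Set X) (h₀ : IsOpen U₀) (h₁ : IsOpen U₁) (hdisj : Disjoint U₀ U₁)
    (hc₀ : (⋃ n : ℤ, ⇑(T ^ n) '' U₀) = univ) (hc₁ : (⋃ n : ℤ, ⇑(T ^ n) '' U₁) = univ) :
    ∃ f : C(X, ℝ), (∀ x : X, f x ∈ Icc (0 : ℝ) 1) ∧
      ∀ x : X, (∃ n : ℤ, f ((T ^ n) x) = 0) ∧ (∃ n : ℤ, f ((T ^ n) x) = 1) := by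
  have hcont := Equiv.Perm.continuous_zpow hT hT'
  obtain ⟨F₀, hF₀, hF₀U₀, hF₀cover⟩ := exists_isClosed_subset_forall_exists_apply_mem hcont h₀
    (T.exists_zpow_apply_mem_of_iUnion_zpow_image_eq_univ hc₀)
  obtain ⟨F₁, hF₁, hF₁U₁, hF₁cover⟩ := exists_isClosed_subset_forall_exists_apply_mem hcont h₁
    (T.exists_zpow_apply_mem_of_iUnion_zpow_image_eq_univ hc₁)
  obtain ⟨f, hf₀, hf₁, hf⟩ :=
    exists_continuous_zero_one_of_isClosed hF₀ hF₁ (hdisj.mono hF₀U₀ hF₁U₁)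
  refine ⟨f, hf, fun x => ⟨?_, ?_⟩⟩
  · obtain ⟨n, hn⟩ := hF₀cover x
    exact ⟨n, hf₀ hn⟩
  · obtain ⟨n, hn⟩ := hF₁cover x
    exact ⟨n, hf₁ hn⟩
end
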